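/- arXiv:2201.02197 — 2 statements merged into one kernel-verified Lean document; each statement's English description precedes it below -/
import Mathlib

section
/- (Mass Stealing Lemma.) Let C be a condensed configuration of n regions on ℝ with density |x|, and suppose the leftmost interval of C (the interval whose left endpoint is the minimum of the union of the intervals) belongs to a region R that also has an interval contained in [0,∞). Then there exists a configuration of n regions with the same list of weighted masses whose total weighted perimeter is strictly smaller than that of C, and in which region R consists of a single interval contained in (−∞,0]. -/
open MeasureTheory Finset

/-- A configuration of `n` regions made of `k` nondegenerate closed intervals
with pairwise disjoint interiors, each interval labeled by one of the regions. -/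
structure Config (n k : ℕ) where
  lo : Fin k → ℝ
  hi : Fin k → ℝ
  lab : Fin k → Fin n
  nondeg : ∀ j, lo j < hi j
  disj : ∀ i j, i ≠ j → Set.Ioo (lo i) (hi i) ∩ Set.Ioo (lo j) (hi j) = ∅

namespace Config

variable {n k : ℕ}

/-- Weighted mass of region `i` with respect to the density `|x|`. -/
noncomputable def mass (C : Config n k) (i : Fin n) : ℝ :=
  ∑ j ∈ univ.filter (fun j => C.lab j = i), ∫ x in C.lo j..C.hi j, |x|

/-- The (finite) set of all endpoints of intervals of the configuration. -/
noncomputable def endpointSet (C : Config n k) : Finset ℝ :=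
  image C.lo univ ∪ image C.hi univ

/-- Total weighted perimeter with respect to the density `|x|`. -/
noncomputable def perim (C : Config n k) : ℝ :=
  ∑ x ∈ C.endpointSet, |x|

/-- A configuration is condensed if the union of its intervals is a closed interval
containing `0` and each region has at most one interval contained in `(-∞,0]`
and at most one interval contained in `[0,∞)`. -/
def Condensed (C : Config n k) : Prop :=
  (∃ a b : ℝ, a ≤ 0 ∧ 0 ≤ b ∧ (⋃ j, Set.Icc (C.lo j) (C.hi j)) = Set.Icc a b) ∧
  ∀ i : Fin n,
    (univ.filter (fun j => C.lab j = i ∧ C.hi j ≤ 0)).card ≤ 1 ∧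
    (univ.filter (fun j => C.lab j = i ∧ 0 ≤ C.lo j)).card ≤ 1

/-- A configuration is isoperimetric if its total weighted perimeter is least among all
configurations of `n` regions with the same list of weighted masses. -/
def Isoperimetric (C : Config n k) : Prop :=
  ∀ (k' : ℕ) (C' : Config n k'), (∀ i, C'.mass i = C.mass i) → C.perim ≤ C'.perim

end Config

/-!
Measure positions by the mass coordinate `m x = x * |x|`, twice the signed mass between `0`
and `x`; in it the density `|x|` becomes Lebesgue measure. Let `[a, h₀]` be the leftmost interval
of `R` and `[c, d] ⊆ [0, ∞)` its interval on the right. Besides these, `R` has at most one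
interval `[u, v]`, which straddles `0` (put `u = 0` if there is none). Delete the intervals of `R`
and close the gaps `[u, 0]` and `[c, d]` by a monotone map which is a translation in the mass
coordinate on every remaining interval and moves no point away from `0`: masses are kept and no
endpoint gets heavier. All of `R`'s mass `M` then goes into one interval `[a', h']` ending where
`min h₀ u` lands. Since `m a' = m h' - 2M ≥ m a - m d`, we get `a'² ≤ a² + d² < (|a| + d)²`, so
the new endpoint `a'` weighs less than the endpoints `a` and `d` that disappear (`d` lands on the
image of `c`).
-/
theorem strictMono_mul_abs : StrictMono fun x : ℝ => x * |x| := by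
  refine strictMono_of_odd_strictMonoOn_nonneg (fun x => by simp [abs_neg]) ?_
  intro x hx y _ hxy
  have hx : 0 ≤ x := hx
  simp only [abs_of_nonneg hx, abs_of_nonneg (hx.trans hxy.le)]
  exact mul_self_lt_mul_self hx hxy

theorem surjective_mul_abs : Function.Surjective fun x : ℝ => x * |x| := by
  intro y
  rcases le_total 0 y with hy | hy
  · exact ⟨√y, by simp [abs_of_nonneg (Real.sqrt_nonneg y), Real.mul_self_sqrt hy]⟩
  · refine ⟨-√(-y), ?_⟩
    simp [abs_of_nonneg (Real.sqrt_nonneg _), Real.mul_self_sqrt (neg_nonneg.2 hy)]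

noncomputable def massCoord : ℝ ≃o ℝ :=
  StrictMono.orderIsoOfSurjective _ strictMono_mul_abs surjective_mul_abs

theorem massCoord_apply (x : ℝ) : massCoord x = x * |x| := rfl

@[simp] theorem massCoord_zero : massCoord 0 = 0 := by simp [massCoord_apply]

theorem massCoord_nonneg_iff {x : ℝ} : 0 ≤ massCoord x ↔ 0 ≤ x := by
  simpa using massCoord.le_iff_le (x := 0) (y := x)

theorem massCoord_nonpos_iff {x : ℝ} : massCoord x ≤ 0 ↔ x ≤ 0 := by
  simpa using massCoord.le_iff_le (x := x) (y := 0)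

theorem integral_abs_zero_left (q : ℝ) : ∫ x in (0 : ℝ)..q, |x| = massCoord q / 2 := by
  rcases le_total 0 q with hq | hq
  · have : ∫ x in (0 : ℝ)..q, |x| = ∫ x in (0 : ℝ)..q, x :=
      intervalIntegral.integral_congr fun x hx => abs_of_nonneg (Set.uIcc_of_le hq ▸ hx).1
    rw [this, integral_id, massCoord_apply, abs_of_nonneg hq]
    ring
  · have : ∫ x in (0 : ℝ)..q, |x| = ∫ x in (0 : ℝ)..q, -x :=
      intervalIntegral.integral_congr fun x hx => abs_of_nonpos (Set.uIcc_of_ge hq ▸ hx).2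
    rw [this, intervalIntegral.integral_neg, integral_id, massCoord_apply, abs_of_nonpos hq]
    ring

theorem integral_abs_eq (p q : ℝ) : ∫ x in p..q, |x| = (massCoord q - massCoord p) / 2 := by
  rw [← intervalIntegral.integral_interval_sub_left (continuous_abs.intervalIntegrable 0 q)
    (continuous_abs.intervalIntegrable 0 p), integral_abs_zero_left, integral_abs_zero_left]
  ring

theorem integral_abs_pos_iff {p q : ℝ} : 0 < ∫ x in p..q, |x| ↔ p < q := by
  rw [integral_abs_eq, div_pos_iff_of_pos_right two_pos, sub_pos, massCoord.lt_iff_lt]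

theorem exists_integral_abs_eq_of_two_mul_le {a d h' M : ℝ} (ha : a < 0) (hd : 0 < d) (hh' : h' ≤ 0)
    (hM : 0 < M) (hMle : 2 * M ≤ massCoord h' - massCoord a + massCoord d) :
    ∃ a' < h', ∫ x in a'..h', |x| = M ∧ |a'| < |a| + |d| := by
  set a' := massCoord.symm (massCoord h' - 2 * M)
  have ha' : massCoord a' = massCoord h' - 2 * M := massCoord.apply_symm_apply _
  have ha'0 : a' ≤ 0 := by
    rw [← massCoord_nonpos_iff, ha']
    linarith [massCoord_nonpos_iff.2 hh']
  have hma' : massCoord a - massCoord d ≤ massCoord a' := by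
    rw [ha']
    linarith
  refine ⟨a', by rw [← massCoord.lt_iff_lt, ha']; linarith, by rw [integral_abs_eq, ha']; ring, ?_⟩
  rw [massCoord_apply, massCoord_apply, massCoord_apply, abs_of_neg ha, abs_of_pos hd,
    abs_of_nonpos ha'0] at hma'
  rw [abs_of_neg ha, abs_of_pos hd, abs_of_nonpos ha'0]
  nlinarith

section Slide

variable {u c d : ℝ}

/-- In the mass coordinate, `slide u c d` collapses `[u, 0]` to `0` and `[c, d]` to `c`, fixes
`[0, c]` and translates `(-∞, u]` and `[d, ∞)` accordingly; each summand is one of these ramps. -/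
noncomputable def slide (u c d t : ℝ) : ℝ :=
  massCoord.symm (min (massCoord t - massCoord u) 0 + min (max (massCoord t) 0) (massCoord c) +
    max (massCoord t - massCoord d) 0)

theorem monotone_slide : Monotone (slide u c d) := by
  intro s t hst
  have := massCoord.monotone hst
  unfold slide
  gcongr

theorem massCoord_slide (t : ℝ) :
    massCoord (slide u c d t) = min (massCoord t - massCoord u) 0 +
      min (max (massCoord t) 0) (massCoord c) + max (massCoord t - massCoord d) 0 :=
  massCoord.apply_symm_apply _

theorem massCoord_slide_of_le (hu : u ≤ 0) (hc : 0 ≤ c) (hcd : c ≤ d) {t : ℝ} (ht : t ≤ u) :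
    massCoord (slide u c d t) = massCoord t - massCoord u := by
  have hmt : massCoord t ≤ massCoord u := massCoord.monotone ht
  have hmu : massCoord u ≤ 0 := massCoord_nonpos_iff.2 hu
  have hmd : 0 ≤ massCoord d := massCoord_nonneg_iff.2 (hc.trans hcd)
  rw [massCoord_slide, min_eq_left (by linarith), max_eq_right (by linarith),
    min_eq_left (massCoord_nonneg_iff.2 hc), max_eq_right (by linarith)]
  ring

theorem slide_eq_self (hu : u ≤ 0) (hc : 0 ≤ c) (hcd : c ≤ d) {t : ℝ} (ht : 0 ≤ t ∨ u = 0)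
    (htc : t ≤ c) : slide u c d t = t := by
  have hmtc : massCoord t ≤ massCoord c := massCoord.monotone htc
  have hmc : 0 ≤ massCoord c := massCoord_nonneg_iff.2 hc
  have hmcd : massCoord c ≤ massCoord d := massCoord.monotone hcd
  have hleft : min (massCoord t - massCoord u) 0 + max (massCoord t) 0 = massCoord t := by
    rcases ht with ht | rfl
    · have hmu : massCoord u ≤ 0 := massCoord_nonpos_iff.2 hu
      have hmt : 0 ≤ massCoord t := massCoord_nonneg_iff.2 ht
      rw [min_eq_right (by linarith), max_eq_left hmt, zero_add]
    · rw [massCoord_zero, sub_zero, min_add_max, add_zero]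
  apply massCoord.injective
  rw [massCoord_slide, min_eq_left (max_le hmtc hmc),
    max_eq_right (by linarith : massCoord t - massCoord d ≤ 0), add_zero, hleft]

theorem massCoord_slide_of_ge (hu : u ≤ 0) (hc : 0 ≤ c) (hcd : c ≤ d) {t : ℝ} (ht : d ≤ t) :
    massCoord (slide u c d t) = massCoord t - massCoord d + massCoord c := by
  have hmt : massCoord d ≤ massCoord t := massCoord.monotone ht
  have hmu : massCoord u ≤ 0 := massCoord_nonpos_iff.2 hu
  have hmc : 0 ≤ massCoord c := massCoord_nonneg_iff.2 hc
  have hmcd : massCoord c ≤ massCoord d := massCoord.monotone hcd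
  rw [massCoord_slide, min_eq_right (by linarith), max_eq_left (by linarith),
    min_eq_right (by linarith), max_eq_left (by linarith)]
  ring

theorem slide_left (hu : u ≤ 0) (hc : 0 ≤ c) (hcd : c ≤ d) : slide u c d u = 0 :=
  massCoord.injective <| by rw [massCoord_slide_of_le hu hc hcd le_rfl, sub_self, massCoord_zero]

theorem slide_right (hu : u ≤ 0) (hc : 0 ≤ c) (hcd : c ≤ d) : slide u c d d = c :=
  massCoord.injective <| by rw [massCoord_slide_of_ge hu hc hcd le_rfl, sub_self, zero_add]

theorem integral_abs_slide (hu : u ≤ 0) (hc : 0 ≤ c) (hcd : c ≤ d) {p q : ℝ} (hpq : p ≤ q)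
    (hleft : q ≤ u ∨ 0 ≤ p ∨ u = 0) (hright : q ≤ c ∨ d ≤ p) :
    ∫ x in slide u c d p..slide u c d q, |x| = ∫ x in p..q, |x| := by
  rw [integral_abs_eq, integral_abs_eq]
  congr 1
  rcases hright with hqc | hdp
  · rcases hleft with hqu | hp
    · rw [massCoord_slide_of_le hu hc hcd hqu, massCoord_slide_of_le hu hc hcd (hpq.trans hqu)]
      ring
    · rw [slide_eq_self hu hc hcd hp (hpq.trans hqc),
        slide_eq_self hu hc hcd (hp.imp_left (·.trans hpq)) hqc]
  · rw [massCoord_slide_of_ge hu hc hcd hdp, massCoord_slide_of_ge hu hc hcd (hdp.trans hpq)]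
    ring

theorem abs_slide_le (hu : u ≤ 0) (hc : 0 ≤ c) (hcd : c ≤ d) (t : ℝ) :
    |slide u c d t| ≤ |t| := by
  have hmu : massCoord u ≤ 0 := massCoord_nonpos_iff.2 hu
  have hmc : 0 ≤ massCoord c := massCoord_nonneg_iff.2 hc
  have hmcd : massCoord c ≤ massCoord d := massCoord.monotone hcd
  rcases le_total t 0 with ht | ht
  · have hmt : massCoord t ≤ 0 := massCoord_nonpos_iff.2 ht
    have h : massCoord (slide u c d t) = min (massCoord t - massCoord u) 0 := by
      rw [massCoord_slide, max_eq_right hmt, min_eq_left hmc, max_eq_right (by linarith)]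
      ring
    refine abs_le_abs_of_nonpos ?_ ?_
    · rw [← massCoord_nonpos_iff, h]
      exact min_le_right _ _
    · rw [← massCoord.le_iff_le, h]
      exact le_min (by linarith) hmt
  · have hmt : 0 ≤ massCoord t := massCoord_nonneg_iff.2 ht
    have h : massCoord (slide u c d t) =
        min (massCoord t) (massCoord c) + max (massCoord t - massCoord d) 0 := by
      rw [massCoord_slide, max_eq_left hmt, min_eq_right (by linarith), zero_add]
    refine abs_le_abs_of_nonneg ?_ ?_
    · rw [← massCoord_nonneg_iff, h]
      exact add_nonneg (le_min hmt hmc) (le_max_right _ _)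
    · rw [← massCoord.le_iff_le, h]
      rcases le_total (massCoord t) (massCoord d) with htd | htd
      · rw [max_eq_right (by linarith), add_zero]
        exact min_le_left _ _
      · rw [max_eq_left (by linarith)]
        linarith [min_le_right (massCoord t) (massCoord c)]

end Slide

theorem Set.Ioo_inter_Ioo_eq_empty_of_le {α : Type*} [LinearOrder α] {a b c d : α} (h : b ≤ c) :
    Set.Ioo a b ∩ Set.Ioo c d = ∅ := by
  rw [Set.Ioo_inter_Ioo]
  exact Set.Ioo_eq_empty (not_lt.2 (inf_le_left.trans (h.trans le_sup_right)))

theorem Finset.apply_mem_image_erase_erase {α β : Type*} [DecidableEq α] [DecidableEq β]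
    {s : Finset α} {F : α → β} {a c d t : α} (ht : t ∈ s) (hta : t ≠ a) (hc : c ∈ s)
    (hca : c ≠ a) (hcd : c ≠ d) (hF : F d = F c) : F t ∈ ((s.erase a).erase d).image F := by
  by_cases htd : t = d
  · rw [htd, hF]
    exact mem_image_of_mem F (mem_erase.2 ⟨hcd, mem_erase.2 ⟨hca, hc⟩⟩)
  · exact mem_image_of_mem F (mem_erase.2 ⟨htd, mem_erase.2 ⟨hta, ht⟩⟩)

namespace Config

variable {n k : ℕ}

theorem hi_le_lo_or_hi_le_lo (C : Config n k) {i j : Fin k} (hij : i ≠ j) :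
    C.hi i ≤ C.lo j ∨ C.hi j ≤ C.lo i := by
  have h := Set.Ioo_disjoint_Ioo.1 (Set.disjoint_iff_inter_eq_empty.2 (C.disj i j hij))
  rw [min_le_iff, le_max_iff, le_max_iff] at h
  rcases h with (h | h) | (h | h)
  · exact absurd h (C.nondeg i).not_ge
  · exact .inl h
  · exact .inr h
  · exact absurd h (C.nondeg j).not_ge

theorem eq_of_mem_Ioo_of_mem_Ioo (C : Config n k) {i j : Fin k} {x : ℝ}
    (hi : x ∈ Set.Ioo (C.lo i) (C.hi i)) (hj : x ∈ Set.Ioo (C.lo j) (C.hi j)) : i = j := by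
  by_contra hij
  rcases C.hi_le_lo_or_hi_le_lo hij with h | h
  · linarith [hi.2, hj.1]
  · linarith [hi.1, hj.2]

theorem map_Ioo_inter_map_Ioo_eq_empty (C : Config n k) {F : ℝ → ℝ} (hF : Monotone F)
    {i j : Fin k} (hij : i ≠ j) :
    Set.Ioo (F (C.lo i)) (F (C.hi i)) ∩ Set.Ioo (F (C.lo j)) (F (C.hi j)) = ∅ := by
  rcases C.hi_le_lo_or_hi_le_lo hij with h | h
  · exact Set.Ioo_inter_Ioo_eq_empty_of_le (hF h)
  · rw [Set.inter_comm]
    exact Set.Ioo_inter_Ioo_eq_empty_of_le (hF h)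

theorem mass_pos (C : Config n k) (j : Fin k) : 0 < C.mass (C.lab j) :=
  (integral_abs_pos_iff.2 (C.nondeg j)).trans_le <|
    single_le_sum (fun j _ => (integral_abs_pos_iff.2 (C.nondeg j)).le) (by simp)

theorem mass_le_sum_of_subset (C : Config n k) {i : Fin n} {T : Finset (Fin k)}
    (hT : ∀ j, C.lab j = i → j ∈ T) : C.mass i ≤ ∑ j ∈ T, ∫ x in C.lo j..C.hi j, |x| :=
  sum_le_sum_of_subset_of_nonneg (fun j hj => hT j (mem_filter.1 hj).2) fun j _ _ =>
    (integral_abs_pos_iff.2 (C.nondeg j)).le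

theorem lo_mem_endpointSet (C : Config n k) (j : Fin k) : C.lo j ∈ C.endpointSet :=
  mem_union_left _ (mem_image_of_mem _ (mem_univ j))

theorem hi_mem_endpointSet (C : Config n k) (j : Fin k) : C.hi j ∈ C.endpointSet :=
  mem_union_right _ (mem_image_of_mem _ (mem_univ j))

noncomputable def ofFintype {ι : Type*} [Fintype ι] (lo hi : ι → ℝ) (lab : ι → Fin n)
    (nondeg : ∀ x, lo x < hi x)
    (disj : ∀ x y, x ≠ y → Set.Ioo (lo x) (hi x) ∩ Set.Ioo (lo y) (hi y) = ∅) :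
    Config n (Fintype.card ι) where
  lo := lo ∘ (Fintype.equivFin ι).symm
  hi := hi ∘ (Fintype.equivFin ι).symm
  lab := lab ∘ (Fintype.equivFin ι).symm
  nondeg _ := nondeg _
  disj _ _ hij := disj _ _ ((Fintype.equivFin ι).symm.injective.ne hij)

section OfFintype

variable {ι : Type*} [Fintype ι] {lo hi : ι → ℝ} {lab : ι → Fin n} {nondeg : ∀ x, lo x < hi x}
  {disj : ∀ x y, x ≠ y → Set.Ioo (lo x) (hi x) ∩ Set.Ioo (lo y) (hi y) = ∅}

theorem mass_ofFintype (i : Fin n) :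
    (ofFintype lo hi lab nondeg disj).mass i = ∑ x with lab x = i, ∫ t in lo x..hi x, |t| := by
  rw [mass, Finset.sum_filter, Finset.sum_filter]
  exact (Fintype.equivFin ι).symm.sum_comp fun x => if lab x = i then ∫ t in lo x..hi x, |t| else 0

theorem endpointSet_ofFintype [DecidableEq ι] :
    (ofFintype lo hi lab nondeg disj).endpointSet = image lo univ ∪ image hi univ := by
  simp only [endpointSet, ofFintype, ← Finset.image_image, Finset.image_univ_equiv]

end OfFintype

theorem exists_replaceRegion (C : Config n k) (R : Fin n) {F : ℝ → ℝ} (hF : Monotone F)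
    (hmass : ∀ j, C.lab j ≠ R →
      ∫ x in F (C.lo j)..F (C.hi j), |x| = ∫ x in C.lo j..C.hi j, |x|)
    {a' h' : ℝ} (hah : a' < h') (hleft : ∀ j, C.lab j ≠ R → h' ≤ F (C.lo j))
    {S : Finset ℝ} (hS : ∀ j, C.lab j ≠ R → F (C.lo j) ∈ S ∧ F (C.hi j) ∈ S) :
    ∃ (k' : ℕ) (C' : Config n k'),
      (∀ i ≠ R, C'.mass i = C.mass i) ∧ C'.mass R = ∫ x in a'..h', |x| ∧
      (∃! j, C'.lab j = R) ∧ (∀ j, C'.lab j = R → C'.hi j = h') ∧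
      C'.endpointSet ⊆ insert a' (insert h' S) := by
  classical
  let lo' : Option {j // C.lab j ≠ R} → ℝ := fun x => x.elim a' fun j => F (C.lo j)
  let hi' : Option {j // C.lab j ≠ R} → ℝ := fun x => x.elim h' fun j => F (C.hi j)
  let lab' : Option {j // C.lab j ≠ R} → Fin n := fun x => x.elim R fun j => C.lab j
  have nondeg : ∀ x, lo' x < hi' x := by
    rintro (_ | j)
    · exact hah
    · exact integral_abs_pos_iff.1 ((hmass j j.2).symm ▸ integral_abs_pos_iff.2 (C.nondeg j))
  have disj : ∀ x y, x ≠ y → Set.Ioo (lo' x) (hi' x) ∩ Set.Ioo (lo' y) (hi' y) = ∅ := by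
    rintro (_ | i) (_ | j) hij
    · exact absurd rfl hij
    · exact Set.Ioo_inter_Ioo_eq_empty_of_le (hleft j j.2)
    · rw [Set.inter_comm]
      exact Set.Ioo_inter_Ioo_eq_empty_of_le (hleft i i.2)
    · exact C.map_Ioo_inter_map_Ioo_eq_empty hF fun h => hij (congrArg some (Subtype.ext h))
  have hlab' : ∀ x, lab' x = R ↔ x = none := by
    rintro (_ | j)
    · simp [lab']
    · simp [lab', j.2]
  set e := Fintype.equivFin (Option {j // C.lab j ≠ R})
  refine ⟨_, ofFintype lo' hi' lab' nondeg disj, fun i hi => ?_, ?_,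
    ⟨e none, (hlab' _).2 (e.symm_apply_apply none), fun j hj => e.symm_apply_eq.1 ((hlab' _).1 hj)⟩,
    fun j hj => ?_, ?_⟩
  · rw [mass_ofFintype, Finset.sum_filter, Fintype.sum_option, mass, Finset.sum_filter,
      if_neg (Ne.symm hi : lab' none ≠ i), zero_add]
    refine (Finset.sum_subtype (univ.filter (C.lab · ≠ R)) (p := (C.lab · ≠ R)) (by simp)
      fun j => if C.lab j = i then ∫ x in F (C.lo j)..F (C.hi j), |x| else 0).symm.trans ?_
    rw [Finset.sum_filter]
    refine Finset.sum_congr rfl fun j _ => ?_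
    by_cases hj : C.lab j = i
    · simp [hj, hmass j (hj ▸ hi), hi]
    · simp [hj]
  · rw [mass_ofFintype, Finset.sum_eq_single_of_mem none (by simp [lab'])
      fun x hx hne => absurd ((hlab' x).1 (mem_filter.1 hx).2) hne]
    rfl
  · show hi' (e.symm j) = h'
    rw [(hlab' _).1 hj]; rfl
  · rw [endpointSet_ofFintype]
    intro x
    simp only [mem_union, mem_image, mem_univ, true_and, mem_insert]
    rintro (⟨(_ | j), rfl⟩ | ⟨(_ | j), rfl⟩)
    · exact .inl rfl
    · exact .inr (.inr (hS j j.2).1)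
    · exact .inr (.inl rfl)
    · exact .inr (.inr (hS j j.2).2)

theorem perim_lt_of_endpointSet_subset {k' : ℕ} {C : Config n k} {C' : Config n k'}
    {F : ℝ → ℝ} (hF : ∀ t, |F t| ≤ |t|) {a d a' h' : ℝ} (ha : a ∈ C.endpointSet)
    (hd : d ∈ C.endpointSet) (had : a ≠ d)
    (hsub : C'.endpointSet ⊆ insert a' (insert h' (((C.endpointSet.erase a).erase d).image F)))
    (hh' : h' ∉ ((C.endpointSet.erase a).erase d).image F → h' = 0) (ha' : |a'| < |a| + |d|) :
    C'.perim < C.perim := by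
  set E₀ := (C.endpointSet.erase a).erase d
  have hsplit : C.perim = |a| + (|d| + ∑ x ∈ E₀, |x|) := by
    rw [perim, ← add_sum_erase _ _ ha, ← add_sum_erase _ _ (mem_erase.2 ⟨had.symm, hd⟩)]
  have hinsert : ∑ x ∈ insert a' (insert h' (E₀.image F)), |x| ≤
      |a'| + ∑ x ∈ insert h' (E₀.image F), |x| := by
    by_cases h : a' ∈ insert h' (E₀.image F)
    · rw [insert_eq_of_mem h]
      linarith [abs_nonneg a']
    · rw [sum_insert h]
  have hh'sum : ∑ x ∈ insert h' (E₀.image F), |x| = ∑ x ∈ E₀.image F, |x| :=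
    sum_insert_of_eq_zero_if_notMem fun h => by rw [hh' h, abs_zero]
  calc C'.perim ≤ ∑ x ∈ insert a' (insert h' (E₀.image F)), |x| :=
        sum_le_sum_of_subset_of_nonneg hsub fun x _ _ => abs_nonneg x
    _ ≤ |a'| + ∑ x ∈ E₀.image F, |x| := hh'sum ▸ hinsert
    _ ≤ |a'| + ∑ x ∈ E₀, |F x| := add_le_add le_rfl (sum_image_le_of_nonneg fun _ _ => abs_nonneg _)
    _ ≤ |a'| + ∑ x ∈ E₀, |x| := add_le_add le_rfl (sum_le_sum fun x _ => hF x)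
    _ < C.perim := by rw [hsplit]; linarith

variable {C : Config n k} {j₀ j₁ : Fin k}

theorem hi_le_lo_of_forall_lo_le (hmin : ∀ j, C.lo j₀ ≤ C.lo j) {j : Fin k} (hj : j ≠ j₀) :
    C.hi j₀ ≤ C.lo j := by
  rcases C.hi_le_lo_or_hi_le_lo hj with h | h
  · linarith [hmin j, C.nondeg j]
  · exact h

namespace Condensed

theorem eq_of_lo_nonneg (hC : C.Condensed) {i j : Fin k} (hlab : C.lab i = C.lab j)
    (hi : 0 ≤ C.lo i) (hj : 0 ≤ C.lo j) : i = j :=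
  card_le_one.1 (hC.2 (C.lab j)).2 i (by simp [hlab, hi]) j (by simp [hj])

theorem eq_of_hi_nonpos (hC : C.Condensed) {i j : Fin k} (hlab : C.lab i = C.lab j)
    (hi : C.hi i ≤ 0) (hj : C.hi j ≤ 0) : i = j :=
  card_le_one.1 (hC.2 (C.lab j)).1 i (by simp [hlab, hi]) j (by simp [hj])

theorem lo_neg (hC : C.Condensed) (hmin : ∀ j, C.lo j₀ ≤ C.lo j) (hne : j₁ ≠ j₀)
    (hlab : C.lab j₁ = C.lab j₀) (hpos : 0 ≤ C.lo j₁) : C.lo j₀ < 0 := by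
  obtain ⟨A, B, hA, hB, hU⟩ := hC.1
  obtain ⟨j, hj⟩ := Set.mem_iUnion.1 (hU ▸ Set.mem_Icc.2 ⟨hA, hB⟩ : (0 : ℝ) ∈ _)
  refine (hmin j).trans hj.1 |>.lt_of_ne fun h => hne ?_
  exact hC.eq_of_lo_nonneg hlab hpos h.ge

theorem lo_neg_and_hi_pos_of_lab_eq (hC : C.Condensed) (hmin : ∀ j, C.lo j₀ ≤ C.lo j)
    (hlab : C.lab j₁ = C.lab j₀) (hpos : 0 ≤ C.lo j₁) {j : Fin k} (hj : C.lab j = C.lab j₀)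
    (hj₀ : j ≠ j₀) (hj₁ : j ≠ j₁) : C.lo j < 0 ∧ 0 < C.hi j := by
  constructor
  · by_contra! h
    exact hj₁ (hC.eq_of_lo_nonneg (hj.trans hlab.symm) h hpos)
  · by_contra! h
    have := hi_le_lo_of_forall_lo_le hmin hj₀
    exact hj₀ (hC.eq_of_hi_nonpos hj h (by linarith [C.nondeg j]))

theorem gap_of_straddle (hC : C.Condensed) (hmin : ∀ j, C.lo j₀ ≤ C.lo j) (hne : j₁ ≠ j₀)
    (hlab : C.lab j₁ = C.lab j₀) (hpos : 0 ≤ C.lo j₁) {jm : Fin k} (hmlab : C.lab jm = C.lab j₀)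
    (hm₀ : jm ≠ j₀) (hm₁ : jm ≠ j₁) :
    (∀ j, C.lab j ≠ C.lab j₀ → C.hi j ≤ C.lo jm ∨ 0 ≤ C.lo j) ∧
      2 * C.mass (C.lab j₀) ≤ massCoord (C.hi j₀) - massCoord (C.lo j₀) +
        massCoord (C.hi j₁) - massCoord (C.lo jm) := by
  obtain ⟨hu, hv⟩ := hC.lo_neg_and_hi_pos_of_lab_eq hmin hlab hpos hmlab hm₀ hm₁
  refine ⟨fun j hj => ?_, ?_⟩
  · have hjm : j ≠ jm := fun h => hj (h ▸ hmlab)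
    exact (C.hi_le_lo_or_hi_le_lo hjm).imp_right hv.le.trans
  have hT : ∀ j, C.lab j = C.lab j₀ → j ∈ ({j₀, jm, j₁} : Finset (Fin k)) := by
    intro j hj
    by_cases h₀ : j = j₀
    · simp [h₀]
    by_cases h₁ : j = j₁
    · simp [h₁]
    obtain ⟨hju, hjv⟩ := hC.lo_neg_and_hi_pos_of_lab_eq hmin hlab hpos hj h₀ h₁
    simp [C.eq_of_mem_Ioo_of_mem_Ioo (x := 0) ⟨hju, hjv⟩ ⟨hu, hv⟩]
  have hM := C.mass_le_sum_of_subset hT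
  rw [sum_insert (by simp [hm₀.symm, hne.symm]), sum_pair hm₁, integral_abs_eq,
    integral_abs_eq, integral_abs_eq] at hM
  have hvc : C.hi jm ≤ C.lo j₁ := (C.hi_le_lo_or_hi_le_lo hm₁).resolve_right fun h => by
    linarith [C.nondeg j₁]
  linarith [massCoord.monotone hvc, massCoord_nonneg_iff.2 hpos]

/-- `u` is the left end of the interval of `R` straddling `0`, or `0` if there is none. -/
theorem exists_gap (hC : C.Condensed) (hmin : ∀ j, C.lo j₀ ≤ C.lo j) (hne : j₁ ≠ j₀)
    (hlab : C.lab j₁ = C.lab j₀) (hpos : 0 ≤ C.lo j₁) :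
    ∃ u ≤ 0, (∀ j, C.lab j ≠ C.lab j₀ → C.hi j ≤ u ∨ 0 ≤ C.lo j ∨ u = 0) ∧
      2 * C.mass (C.lab j₀) ≤ massCoord (min (C.hi j₀) u) - massCoord (C.lo j₀) +
        massCoord (C.hi j₁) - massCoord u := by
  by_cases hm : ∃ jm, C.lab jm = C.lab j₀ ∧ jm ≠ j₀ ∧ jm ≠ j₁
  · obtain ⟨jm, hmlab, hm₀, hm₁⟩ := hm
    obtain ⟨hgap, hM⟩ := hC.gap_of_straddle hmin hne hlab hpos hmlab hm₀ hm₁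
    refine ⟨C.lo jm, (hC.lo_neg_and_hi_pos_of_lab_eq hmin hlab hpos hmlab hm₀ hm₁).1.le,
      fun j hj => (hgap j hj).imp_right .inl, ?_⟩
    rwa [min_eq_left (hi_le_lo_of_forall_lo_le hmin hm₀)]
  push Not at hm
  refine ⟨0, le_rfl, fun _ _ => .inr (.inr rfl), ?_⟩
  have hT : ∀ j, C.lab j = C.lab j₀ → j ∈ ({j₀, j₁} : Finset (Fin k)) := fun j hj => by
    by_cases h₀ : j = j₀
    · simp [h₀]
    · simp [hm j hj h₀]
  have hM := C.mass_le_sum_of_subset hT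
  rw [sum_pair hne.symm, integral_abs_eq, integral_abs_eq] at hM
  have hmc : 0 ≤ massCoord (C.lo j₁) := massCoord_nonneg_iff.2 hpos
  rcases le_total (C.hi j₀) 0 with h | h
  · rw [min_eq_left h, massCoord_zero]
    linarith
  · rw [min_eq_right h, massCoord_zero]
    linarith [massCoord.monotone (hi_le_lo_of_forall_lo_le hmin hne)]

end Condensed

theorem exists_stealing_of_gap (hmin : ∀ j, C.lo j₀ ≤ C.lo j) (hlab : C.lab j₁ = C.lab j₀)
    (hpos : 0 ≤ C.lo j₁) (ha : C.lo j₀ < 0) {u : ℝ} (hu : u ≤ 0)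
    (hgap : ∀ j, C.lab j ≠ C.lab j₀ → C.hi j ≤ u ∨ 0 ≤ C.lo j ∨ u = 0)
    (hM : 2 * C.mass (C.lab j₀) ≤ massCoord (min (C.hi j₀) u) - massCoord (C.lo j₀) +
        massCoord (C.hi j₁) - massCoord u) :
    ∃ (k' : ℕ) (C' : Config n k'),
      (∀ i, C'.mass i = C.mass i) ∧
      C'.perim < C.perim ∧
      (∃! j : Fin k', C'.lab j = C.lab j₀) ∧
      (∀ j : Fin k', C'.lab j = C.lab j₀ → C'.hi j ≤ 0) := by
  set R := C.lab j₀
  have hcd : C.lo j₁ < C.hi j₁ := C.nondeg j₁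
  set F := slide u (C.lo j₁) (C.hi j₁)
  set H := min (C.hi j₀) u
  have hFH : massCoord (F H) = massCoord H - massCoord u :=
    massCoord_slide_of_le hu hpos hcd.le (min_le_right _ _)
  have hFH0 : F H ≤ 0 := slide_left hu hpos hcd.le ▸ monotone_slide (min_le_right _ _)
  obtain ⟨a', hah, hmassR, ha'⟩ := exists_integral_abs_eq_of_two_mul_le ha (hpos.trans_lt hcd) hFH0
    (C.mass_pos j₀) (by rw [hFH]; linarith)
  have hFd : F (C.hi j₁) = F (C.lo j₁) :=
    (slide_right hu hpos hcd.le).trans (slide_eq_self hu hpos hcd.le (.inl hpos) le_rfl).symm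
  have hlo : ∀ j, C.lab j ≠ R → C.hi j₀ ≤ C.lo j := fun j hj =>
    hi_le_lo_of_forall_lo_le hmin (ne_of_apply_ne C.lab hj)
  have hS : ∀ t ∈ C.endpointSet, t ≠ C.lo j₀ →
      F t ∈ ((C.endpointSet.erase (C.lo j₀)).erase (C.hi j₁)).image F := fun t ht hta =>
    apply_mem_image_erase_erase ht hta (C.lo_mem_endpointSet j₁) (by linarith) hcd.ne hFd
  obtain ⟨k', C', hmass, hmassR', huniq, hhi, hsub⟩ := C.exists_replaceRegion R monotone_slide
    (fun j hj => integral_abs_slide hu hpos hcd.le (C.nondeg j).le (hgap j hj)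
      (C.hi_le_lo_or_hi_le_lo (ne_of_apply_ne C.lab (hlab ▸ hj))))
    hah (fun j hj => monotone_slide ((min_le_left _ _).trans (hlo j hj)))
    (fun j hj => ⟨hS _ (C.lo_mem_endpointSet j) (by linarith [hlo j hj, C.nondeg j₀]),
      hS _ (C.hi_mem_endpointSet j) (by linarith [hlo j hj, C.nondeg j₀, C.nondeg j])⟩)
  refine ⟨k', C', fun i => ?_, ?_, huniq, fun j hj => (hhi j hj).trans_le hFH0⟩
  · rcases eq_or_ne i R with rfl | hi
    · rw [hmassR', hmassR]
    · exact hmass i hi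
  refine perim_lt_of_endpointSet_subset (abs_slide_le hu hpos hcd.le) (C.lo_mem_endpointSet j₀)
    (C.hi_mem_endpointSet j₁) (by linarith) hsub (fun hH => ?_) ha'
  obtain h | h : H = C.hi j₀ ∨ H = u := min_choice _ _
  · rw [h] at hH
    exact absurd (hS _ (C.hi_mem_endpointSet j₀) (C.nondeg j₀).ne') hH
  · rw [h]
    exact slide_left hu hpos hcd.le

end Config

/-- Mass Stealing Lemma: if the leftmost interval of a condensed configuration belongs
to a region that also has an interval contained in `[0,∞)`, then there is a
configuration with the same list of weighted masses, strictly smaller total weighted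
perimeter, and in which that region consists of a single interval contained in
`(-∞,0]`. -/
theorem mass_stealing (n k : ℕ) (C : Config n k) (hC : C.Condensed)
    (j₀ : Fin k) (hmin : ∀ j, C.lo j₀ ≤ C.lo j)
    (j₁ : Fin k) (hne : j₁ ≠ j₀) (hlab : C.lab j₁ = C.lab j₀) (hpos : 0 ≤ C.lo j₁) :
    ∃ (k' : ℕ) (C' : Config n k'),
      (∀ i, C'.mass i = C.mass i) ∧
      C'.perim < C.perim ∧
      (∃! j : Fin k', C'.lab j = C.lab j₀) ∧
      (∀ j : Fin k', C'.lab j = C.lab j₀ → C'.hi j ≤ 0) := by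
  obtain ⟨u, hu, hgap, hM⟩ := hC.exists_gap hmin hne hlab hpos
  exact Config.exists_stealing_of_gap hmin hlab hpos (hC.lo_neg hmin hne hlab hpos) hu hgap hM
end

section
/- (Triple bubble with density |x|.) Let 0 < M₁ ≤ M₂ ≤ M₃. Every configuration of 3 regions on ℝ with density |x| whose regions have weighted masses M₁, M₂, M₃ has total weighted perimeter at least √(2M₂) + √(2M₁) + √(2(M₁+M₃)). Moreover, the configuration consisting of the intervals [−√(2M₂), 0] (region of mass M₂), [0, √(2M₁)] (region of mass M₁), and [√(2M₁), √(2(M₁+M₃))] (region of mass M₃) has exactly these weighted masses and total weighted perimeter exactly √(2M₂) + √(2M₁) + √(2(M₁+M₃)). -/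
open MeasureTheory Finset

/-!
Split every region into its parts in `[0, ∞)` and in `(-∞, 0]`; the reflection `x ↦ -x` turns the
second kind into the first, so it suffices to bound the perimeter carried by positive endpoints.
If the parts in `[0, ∞)` have masses `v₀, v₁, v₂`, the outermost positive endpoint of region `i` is
at least `√(2 vᵢ)` (intervals of `|x|`-mass `v` inside `[0, e]` force `e² / 2 ≥ v`), and the largest
of these is at least `√(2 (v₀ + v₁ + v₂))`. As these endpoints are distinct, the positive endpoints
contribute at least `sideCost v`: `√(2 ∑ vᵢ)` plus the two smallest `√(2 vᵢ)`.
The bound `sideCost v + sideCost (M - v)` is concave in the split `v ∈ ∏ [0, Mᵢ]`, so its minimum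
is attained at a vertex, where every region lies on one side of the origin.
-/

open Set (Icc Ici Ioo uIcc uIcc_of_le uIcc_of_ge)

/-- The radius `r ≥ 0` with `∫ x in 0..r, |x| = m`. -/
noncomputable def rad (m : ℝ) : ℝ := √(2 * m)

lemma rad_zero : rad 0 = 0 := by simp [rad]

lemma rad_nonneg (m : ℝ) : 0 ≤ rad m := Real.sqrt_nonneg _

lemma rad_pos {m : ℝ} (hm : 0 < m) : 0 < rad m := Real.sqrt_pos.2 (by linarith)

lemma rad_lt_rad {m m' : ℝ} (hm : 0 ≤ m) (h : m < m') : rad m < rad m' :=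
  Real.sqrt_lt_sqrt (by linarith) (by linarith)

lemma rad_le_rad {m m' : ℝ} (h : m ≤ m') : rad m ≤ rad m' :=
  Real.sqrt_le_sqrt (by linarith)

lemma rad_le_of_two_mul_le_sq {m e : ℝ} (he : 0 ≤ e) (h : 2 * m ≤ e ^ 2) : rad m ≤ e :=
  (Real.sqrt_le_left he).2 h

lemma rad_sq {m : ℝ} (hm : 0 ≤ m) : rad m ^ 2 = 2 * m := Real.sq_sqrt (by linarith)

lemma rad_add_rad_le_rad_add_rad {a b c : ℝ} (ha : 0 ≤ a) (hb : 0 ≤ b) (hbc : b ≤ c) :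
    rad b + rad (a + c) ≤ rad c + rad (a + b) := by
  -- After squaring both sides this is `b (a + c) ≤ c (a + b)`.
  have hprod : rad b * rad (a + c) ≤ rad c * rad (a + b) := by
    simp only [rad, ← Real.sqrt_mul (by linarith : (0:ℝ) ≤ 2 * b),
      ← Real.sqrt_mul (by linarith : (0:ℝ) ≤ 2 * c)]
    exact Real.sqrt_le_sqrt (by nlinarith)
  have := rad_sq hb; have := rad_sq (by linarith : 0 ≤ c)
  have := rad_sq (by linarith : 0 ≤ a + b); have := rad_sq (by linarith : 0 ≤ a + c)
  nlinarith [rad_nonneg b, rad_nonneg c, rad_nonneg (a + b), rad_nonneg (a + c)]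

lemma concaveOn_rad : ConcaveOn ℝ (Ici 0) rad :=
  (Real.strictConcaveOn_sqrt.concaveOn.comp_linearMap ((2 : ℝ) • LinearMap.id)).subset
    (fun x (hx : 0 ≤ x) => by simp; linarith) (convex_Ici 0)

lemma concaveOn_rad_comp_linearMap {E : Type*} [AddCommGroup E] [Module ℝ E] {s : Set E}
    (hs : Convex ℝ s) (ℓ : E →ₗ[ℝ] ℝ) (hℓ : ∀ x ∈ s, 0 ≤ ℓ x) :
    ConcaveOn ℝ s fun x => rad (ℓ x) :=
  (concaveOn_rad.comp_linearMap ℓ).subset hℓ hs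

lemma integral_zero_abs (x : ℝ) : ∫ t in (0)..x, |t| = x * |x| / 2 := by
  rcases le_total 0 x with hx | hx
  · have h : Set.EqOn (fun t => |t|) (fun t => t) (uIcc 0 x) := fun t ht =>
      abs_of_nonneg (uIcc_of_le hx ▸ ht).1
    rw [intervalIntegral.integral_congr h, integral_id, abs_of_nonneg hx]
    ring
  · have h : Set.EqOn (fun t => |t|) (fun t => -t) (uIcc 0 x) := fun t ht =>
      abs_of_nonpos (uIcc_of_ge hx ▸ ht).2
    rw [intervalIntegral.integral_congr h, intervalIntegral.integral_neg, integral_id,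
      abs_of_nonpos hx]
    ring

lemma integral_abs (a b : ℝ) : ∫ t in a..b, |t| = b * |b| / 2 - a * |a| / 2 := by
  rw [← intervalIntegral.integral_interval_sub_left (continuous_abs.intervalIntegrable 0 b)
    (continuous_abs.intervalIntegrable 0 a), integral_zero_abs, integral_zero_abs]

/-- The `|t|`-mass of `[0, x]`, and `0` for `x ≤ 0`. -/
noncomputable def cumMass (x : ℝ) : ℝ := max x 0 ^ 2 / 2

lemma cumMass_mono : Monotone cumMass := fun x y h => by
  unfold cumMass; gcongr

lemma cumMass_of_nonpos {x : ℝ} (hx : x ≤ 0) : cumMass x = 0 := by simp [cumMass, hx]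

lemma cumMass_of_nonneg {x : ℝ} (hx : 0 ≤ x) : cumMass x = x ^ 2 / 2 := by
  simp [cumMass, hx]

lemma cumMass_sub_cumMass_neg (x : ℝ) : cumMass x - cumMass (-x) = x * |x| / 2 := by
  rcases le_total 0 x with hx | hx
  · rw [cumMass_of_nonneg hx, cumMass_of_nonpos (by linarith), abs_of_nonneg hx]; ring
  · rw [cumMass_of_nonpos hx, cumMass_of_nonneg (by linarith), abs_of_nonpos hx]; ring

lemma le_of_disjoint_Ioo {p q p' q' : ℝ} (hpq : p < q) (hq : q ≤ q')
    (h : Disjoint (Ioo p q) (Ioo p' q')) : q ≤ p' := by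
  rw [Set.Ioo_disjoint_Ioo, min_eq_left hq] at h
  exact (le_max_iff.1 h).resolve_left hpq.not_ge

theorem sum_sub_le_of_pairwiseDisjoint {ι : Type*} [DecidableEq ι] {G : ℝ → ℝ} (hG : Monotone G)
    {p q : ι → ℝ} (hpq : ∀ j, p j < q j) (s : Finset ι)
    (hs : (s : Set ι).PairwiseDisjoint fun j => Ioo (p j) (q j)) {y x : ℝ} (hyx : y ≤ x)
    (hbd : ∀ j ∈ s, y ≤ p j ∧ q j ≤ x) :
    ∑ j ∈ s, (G (q j) - G (p j)) ≤ G x - G y := by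
  induction s using Finset.induction_on_max_value q generalizing x with
  | empty => simpa using hG hyx
  | insert a s ha hmax ih =>
    rw [Finset.coe_insert, Set.pairwiseDisjoint_insert] at hs
    obtain ⟨hya, hax⟩ := hbd a (mem_insert_self a s)
    have hs_left : ∀ j ∈ s, q j ≤ p a := fun j hj =>
      le_of_disjoint_Ioo (hpq j) (hmax j hj) (hs.2 j hj (fun h => ha (h ▸ hj))).symm
    have := ih hs.1 (x := p a) hya
      fun j hj => ⟨(hbd j (mem_insert_of_mem hj)).1, hs_left j hj⟩
    rw [sum_insert ha]
    linarith [hG hax]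

namespace Config

variable {n m k : ℕ}

lemma disjoint_Ioo (C : Config n k) {i j : Fin k} (h : i ≠ j) :
    Disjoint (Ioo (C.lo i) (C.hi i)) (Ioo (C.lo j) (C.hi j)) :=
  Set.disjoint_iff_inter_eq_empty.2 (C.disj i j h)

lemma hi_injective (C : Config n k) : Function.Injective C.hi := by
  intro i j h
  by_contra hij
  have := le_of_disjoint_Ioo (C.nondeg i) h.le (C.disjoint_Ioo hij)
  linarith [C.nondeg j]

def relabel (C : Config n k) (e : Fin n ≃ Fin m) : Config m k :=
  { C with lab := e ∘ C.lab }

lemma mass_relabel (C : Config n k) (e : Fin n ≃ Fin m) (i : Fin n) :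
    (C.relabel e).mass (e i) = C.mass i := by
  simp [mass, relabel]

lemma perim_relabel (C : Config n k) (e : Fin n ≃ Fin m) : (C.relabel e).perim = C.perim := rfl

def reflect (C : Config n k) : Config n k where
  lo j := -C.hi j
  hi j := -C.lo j
  lab := C.lab
  nondeg j := neg_lt_neg (C.nondeg j)
  disj i j hij := by
    have h := C.disjoint_Ioo hij
    rw [Set.Ioo_disjoint_Ioo] at h
    rw [← Set.disjoint_iff_inter_eq_empty, Set.Ioo_disjoint_Ioo, min_neg_neg, max_neg_neg]
    exact neg_le_neg h

/-- The `|x|`-mass of the part of region `i` in `[0, ∞)`. -/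
noncomputable def posMass (C : Config n k) (i : Fin n) : ℝ :=
  ∑ j ∈ univ.filter (fun j => C.lab j = i), (cumMass (C.hi j) - cumMass (C.lo j))

lemma posMass_nonneg (C : Config n k) (i : Fin n) : 0 ≤ C.posMass i :=
  sum_nonneg fun j _ => sub_nonneg.2 (cumMass_mono (C.nondeg j).le)

lemma posMass_reflect (C : Config n k) (i : Fin n) : C.reflect.posMass i =
    ∑ j ∈ univ.filter (fun j => C.lab j = i), (cumMass (-C.lo j) - cumMass (-C.hi j)) := rfl

lemma mass_eq_posMass_add (C : Config n k) (i : Fin n) :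
    C.mass i = C.posMass i + C.reflect.posMass i := by
  rw [mass, posMass, posMass_reflect, ← sum_add_distrib]
  refine sum_congr rfl fun j _ => ?_
  rw [integral_abs, ← cumMass_sub_cumMass_neg, ← cumMass_sub_cumMass_neg]
  ring

lemma two_mul_sum_posMass_le (C : Config n k) (T : Finset (Fin n)) {x : ℝ} (hx : 0 ≤ x)
    (hT : ∀ j, C.lab j ∈ T → C.hi j ≤ x) : 2 * ∑ i ∈ T, C.posMass i ≤ x ^ 2 := by
  -- `cumMass` vanishes on `(-∞, 0]`, so the intervals may be packed into `[min y 0, x]`.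
  obtain ⟨y, hy⟩ := (Set.finite_range C.lo).bddBelow
  have hpack := sum_sub_le_of_pairwiseDisjoint cumMass_mono C.nondeg
    (univ.filter fun j => C.lab j ∈ T) (fun i _ j _ hij => C.disjoint_Ioo hij)
    (min_le_right y 0 |>.trans hx) fun j hj =>
      ⟨(min_le_left y 0).trans (hy (Set.mem_range_self j)), hT j (mem_filter.1 hj).2⟩
  rw [cumMass_of_nonpos (min_le_right y 0), cumMass_of_nonneg hx] at hpack
  rw [show ∑ i ∈ T, C.posMass i = _ from sum_fiberwise_eq_sum_filter _ _ _ _]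
  linarith

noncomputable def outerEnd (C : Config n k) (i : Fin n) : ℝ :=
  (insert 0 ((univ.filter fun j => C.lab j = i).image C.hi)).max' (insert_nonempty _ _)

lemma outerEnd_nonneg (C : Config n k) (i : Fin n) : 0 ≤ C.outerEnd i :=
  le_max' _ _ (mem_insert_self _ _)

lemma hi_le_outerEnd (C : Config n k) {j : Fin k} : C.hi j ≤ C.outerEnd (C.lab j) :=
  le_max' _ _ (mem_insert_of_mem (mem_image_of_mem _ (by simp)))

lemma outerEnd_eq_zero_or_hi (C : Config n k) (i : Fin n) :
    C.outerEnd i = 0 ∨ ∃ j, C.lab j = i ∧ C.hi j = C.outerEnd i := by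
  have := max'_mem _ (insert_nonempty 0 ((univ.filter fun j => C.lab j = i).image C.hi))
  simp only [mem_insert, mem_image, mem_filter, mem_univ, true_and] at this
  exact this

lemma rad_posMass_le_outerEnd (C : Config n k) (i : Fin n) : rad (C.posMass i) ≤ C.outerEnd i :=
  rad_le_of_two_mul_le_sq (C.outerEnd_nonneg i) <| by
    simpa using C.two_mul_sum_posMass_le {i} (C.outerEnd_nonneg i) fun j hj =>
      (mem_singleton.1 hj) ▸ C.hi_le_outerEnd

lemma exists_rad_sum_posMass_le_outerEnd [NeZero n] (C : Config n k) :
    ∃ i₀, rad (∑ i, C.posMass i) ≤ C.outerEnd i₀ := by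
  obtain ⟨i₀, hi₀⟩ := Finite.exists_max C.outerEnd
  exact ⟨i₀, rad_le_of_two_mul_le_sq (C.outerEnd_nonneg i₀) <|
    C.two_mul_sum_posMass_le univ (C.outerEnd_nonneg i₀) fun j _ =>
      C.hi_le_outerEnd.trans (hi₀ _)⟩

noncomputable def posPerim (C : Config n k) : ℝ := ∑ x ∈ C.endpointSet with 0 < x, x

lemma sum_outerEnd_le_posPerim (C : Config n k) : ∑ i, C.outerEnd i ≤ C.posPerim := by
  have hinj : Set.InjOn C.outerEnd (univ.filter fun i => C.outerEnd i ≠ 0) := by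
    intro i hi i' hi' h
    obtain ⟨j, rfl, hj⟩ := (C.outerEnd_eq_zero_or_hi i).resolve_left (mem_filter.1 hi).2
    obtain ⟨j', rfl, hj'⟩ := (C.outerEnd_eq_zero_or_hi i').resolve_left (mem_filter.1 hi').2
    rw [C.hi_injective (hj.trans (h.trans hj'.symm))]
  rw [← sum_filter_ne_zero, ← sum_image (f := fun x => x) hinj]
  refine sum_le_sum_of_subset_of_nonneg ?_ fun x hx _ => (mem_filter.1 hx).2.le
  simp only [subset_iff, mem_image, mem_filter, mem_univ, true_and]
  rintro _ ⟨i, hi, rfl⟩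
  obtain ⟨j, -, hj⟩ := (C.outerEnd_eq_zero_or_hi i).resolve_left hi
  exact ⟨hj ▸ mem_union_right _ (mem_image_of_mem _ (mem_univ j)),
    lt_of_le_of_ne (C.outerEnd_nonneg i) (Ne.symm hi)⟩

lemma exists_rad_add_sum_erase_le_posPerim [NeZero n] (C : Config n k) :
    ∃ i₀, rad (∑ i, C.posMass i) + ∑ i ∈ univ.erase i₀, rad (C.posMass i) ≤ C.posPerim := by
  obtain ⟨i₀, hi₀⟩ := C.exists_rad_sum_posMass_le_outerEnd
  refine ⟨i₀, ?_⟩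
  calc rad (∑ i, C.posMass i) + ∑ i ∈ univ.erase i₀, rad (C.posMass i)
      ≤ C.outerEnd i₀ + ∑ i ∈ univ.erase i₀, C.outerEnd i :=
        add_le_add hi₀ (sum_le_sum fun i _ => C.rad_posMass_le_outerEnd i)
    _ = ∑ i, C.outerEnd i := add_sum_erase _ _ (mem_univ i₀)
    _ ≤ C.posPerim := C.sum_outerEnd_le_posPerim

lemma endpointSet_reflect (C : Config n k) :
    C.reflect.endpointSet = C.endpointSet.image (fun x => -x) := by
  rw [endpointSet, endpointSet, image_union, image_image, image_image, union_comm]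
  rfl

lemma perim_eq_posPerim_add (C : Config n k) : C.perim = C.posPerim + C.reflect.posPerim := by
  have hrefl : C.reflect.posPerim = ∑ x ∈ C.endpointSet with x < 0, -x := by
    rw [posPerim, endpointSet_reflect, filter_image, sum_image fun _ _ _ _ => neg_inj.1]
    simp
  rw [hrefl, perim, posPerim, sum_filter, sum_filter, ← sum_add_distrib]
  refine sum_congr rfl fun x _ => ?_
  rcases lt_trichotomy x 0 with hx | rfl | hx
  · simp [hx, hx.not_gt, abs_of_neg hx]
  · simp
  · simp [hx, hx.not_gt, abs_of_pos hx]

end Config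

/-- Perimeter lower bound on one side of the origin for regions with masses `w` on that side. -/
noncomputable def sideCost (w : Fin 3 → ℝ) : ℝ :=
  rad (∑ i, w i) +
    min (rad (w 1) + rad (w 2)) (min (rad (w 0) + rad (w 2)) (rad (w 0) + rad (w 1)))

lemma sideCost_le_rad_sum_add_sum_erase (w : Fin 3 → ℝ) (i₀ : Fin 3) :
    sideCost w ≤ rad (∑ i, w i) + ∑ i ∈ univ.erase i₀, rad (w i) := by
  rw [sum_erase_eq_sub (mem_univ i₀), sideCost, add_le_add_iff_left, Fin.sum_univ_three]
  fin_cases i₀ <;> simp only [Fin.isValue, min_le_iff] <;> grind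

lemma concaveOn_sideCost : ConcaveOn ℝ (Set.univ.pi fun _ => Ici 0) sideCost := by
  have hconv : Convex ℝ (Set.univ.pi fun _ : Fin 3 => Ici (0 : ℝ)) :=
    convex_pi fun _ _ => convex_Ici 0
  have hw (i : Fin 3) :
      ConcaveOn ℝ (Set.univ.pi fun _ => Ici 0) fun w : Fin 3 → ℝ => rad (w i) :=
    concaveOn_rad_comp_linearMap hconv (LinearMap.proj i) fun w hw => hw i trivial
  have hsum :
      ConcaveOn ℝ (Set.univ.pi fun _ => Ici 0) fun w : Fin 3 → ℝ => rad (∑ i, w i) := by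
    simpa using concaveOn_rad_comp_linearMap hconv (∑ i, LinearMap.proj i) fun w hw =>
      by simpa using sum_nonneg fun i _ => hw i trivial
  exact hsum.add (((hw 1).add (hw 2)).inf (((hw 0).add (hw 2)).inf ((hw 0).add (hw 1))))

lemma convexHull_pi_pair_zero {ι : Type*} [Fintype ι] {M : ι → ℝ} (hM : ∀ i, 0 ≤ M i) :
    convexHull ℝ (Set.univ.pi fun i => {0, M i}) = Set.univ.pi fun i => Icc 0 (M i) := by
  simp [convexHull_pair, segment_eq_Icc (hM _)]

lemma rad_add_rad_add_rad_le_sideCost_add_of_vertex {M v : Fin 3 → ℝ} (h0 : 0 ≤ M 0)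
    (h01 : M 0 ≤ M 1) (h12 : M 1 ≤ M 2) (hv : ∀ i, v i = 0 ∨ v i = M i) :
    rad (M 1) + rad (M 0) + rad (M 0 + M 2) ≤ sideCost v + sideCost (M - v) := by
  have := rad_nonneg (M 0); have := rad_nonneg (M 1); have := rad_nonneg (M 2)
  have := rad_le_rad h01; have := rad_le_rad h12
  have := rad_le_rad (show M 0 + M 2 ≤ M 0 + M 1 + M 2 by linarith)
  have := rad_le_rad (show M 0 + M 2 ≤ M 1 + M 2 by linarith)
  have := rad_add_rad_le_rad_add_rad h0 (h0.trans h01) h12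
  rcases hv 0 with h0' | h0' <;> rcases hv 1 with h1' | h1' <;> rcases hv 2 with h2' | h2' <;>
  simp only [sideCost, Fin.sum_univ_three, Pi.sub_apply, h0', h1', h2', sub_self, sub_zero,
    add_zero, zero_add, rad_zero, ← min_add_add_left, ← min_add_add_right, le_min_iff] <;>
  constructorm* _ ∧ _ <;> linarith

theorem rad_add_rad_add_rad_le_sideCost_add {M v : Fin 3 → ℝ} (h0 : 0 ≤ M 0)
    (h01 : M 0 ≤ M 1) (h12 : M 1 ≤ M 2) (hv : v ∈ Set.univ.pi fun i => Icc 0 (M i)) :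
    rad (M 1) + rad (M 0) + rad (M 0 + M 2) ≤ sideCost v + sideCost (M - v) := by
  have hM : ∀ i, 0 ≤ M i := fun i => (hv i trivial).1.trans (hv i trivial).2
  have hbox : Set.univ.pi (fun i => Icc 0 (M i)) ⊆ Set.univ.pi fun _ => Ici 0 :=
    Set.pi_mono fun i _ x hx => hx.1
  have hflip : Set.univ.pi (fun i => Icc 0 (M i)) ⊆
      (AffineMap.const ℝ (Fin 3 → ℝ) M - AffineMap.id ℝ (Fin 3 → ℝ)) ⁻¹'
        Set.univ.pi fun _ => Ici 0 :=
    fun w hw i _ => by simpa using (hw i trivial).2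
  have hconc : ConcaveOn ℝ (Set.univ.pi fun i => Icc 0 (M i))
      fun w => sideCost w + sideCost (M - w) :=
    (concaveOn_sideCost.subset hbox (convex_pi fun i _ => convex_Icc 0 (M i))).add
      ((concaveOn_sideCost.comp_affineMap _).subset hflip
        (convex_pi fun i _ => convex_Icc 0 (M i)))
  obtain ⟨y, hy, hyv⟩ := hconc.exists_le_of_mem_convexHull (t := Set.univ.pi fun i => {0, M i})
    (by rw [← convexHull_pi_pair_zero hM]; exact subset_convexHull ℝ _)
    (by rwa [convexHull_pi_pair_zero hM])
  exact (rad_add_rad_add_rad_le_sideCost_add_of_vertex h0 h01 h12 fun i => hy i trivial).trans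
    hyv

namespace Config

lemma sideCost_posMass_le_posPerim (C : Config 3 k) : sideCost C.posMass ≤ C.posPerim := by
  obtain ⟨i₀, h⟩ := C.exists_rad_add_sum_erase_le_posPerim
  exact (sideCost_le_rad_sum_add_sum_erase _ i₀).trans h

theorem rad_add_rad_add_rad_le_perim (C : Config 3 k) {M : Fin 3 → ℝ} (h0 : 0 ≤ M 0)
    (h01 : M 0 ≤ M 1) (h12 : M 1 ≤ M 2) (hmass : ∀ i, C.mass i = M i) :
    rad (M 1) + rad (M 0) + rad (M 0 + M 2) ≤ C.perim := by
  have hsplit (i : Fin 3) : M i = C.posMass i + C.reflect.posMass i :=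
    (hmass i).symm.trans (C.mass_eq_posMass_add i)
  have hbox : C.posMass ∈ Set.univ.pi fun i => Icc 0 (M i) := fun i _ =>
    ⟨C.posMass_nonneg i, by linarith [hsplit i, C.reflect.posMass_nonneg i]⟩
  have hcompl : M - C.posMass = C.reflect.posMass := funext fun i => by
    simp [hsplit i]
  calc rad (M 1) + rad (M 0) + rad (M 0 + M 2)
      ≤ sideCost C.posMass + sideCost (M - C.posMass) :=
        rad_add_rad_add_rad_le_sideCost_add h0 h01 h12 hbox
    _ ≤ C.posPerim + C.reflect.posPerim := by
      rw [hcompl]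
      exact add_le_add C.sideCost_posMass_le_posPerim C.reflect.sideCost_posMass_le_posPerim
    _ = C.perim := C.perim_eq_posPerim_add.symm

def standardTriple {r₁ r₂ r₃ : ℝ} (h₁ : 0 < r₁) (h₂ : 0 < r₂) (h₁₃ : r₁ < r₃) : Config 3 3 where
  lo := ![-r₂, 0, r₁]
  hi := ![0, r₁, r₃]
  lab := ![1, 0, 2]
  nondeg j := by fin_cases j <;> simpa
  disj i j hij := by
    rw [← Set.disjoint_iff_inter_eq_empty, Set.Ioo_disjoint_Ioo]
    fin_cases i <;> fin_cases j <;> simp [h₁.le] at hij ⊢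

variable {r₁ r₂ r₃ : ℝ} (h₁ : 0 < r₁) (h₂ : 0 < r₂) (h₁₃ : r₁ < r₃)

lemma mass_standardTriple :
    (standardTriple h₁ h₂ h₁₃).mass = ![r₁ ^ 2 / 2, r₂ ^ 2 / 2, (r₃ ^ 2 - r₁ ^ 2) / 2] := by
  funext i
  simp only [mass, sum_filter, Fin.sum_univ_three]
  fin_cases i <;> simp [standardTriple, integral_abs,
    abs_of_pos h₁, abs_of_pos h₂, abs_of_pos (h₁.trans h₁₃)] <;> ring

lemma perim_standardTriple : (standardTriple h₁ h₂ h₁₃).perim = r₂ + r₁ + r₃ := by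
  have hE : (standardTriple h₁ h₂ h₁₃).endpointSet = {-r₂, 0, r₁, r₃} := by
    ext x
    simp [endpointSet, standardTriple, Fin.exists_fin_succ]
    tauto
  have h₃ := h₁.trans h₁₃
  rw [perim, hE, sum_insert, sum_insert, sum_insert, sum_singleton, abs_neg, abs_of_pos h₂,
    abs_zero, abs_of_pos h₁, abs_of_pos h₃]
  · ring
  all_goals simp only [mem_insert, mem_singleton]; rintro (h | h | h) <;> linarith

end Config

/-- Triple bubble with density `|x|`: every configuration of three regions of weighted
masses `0 < M₁ ≤ M₂ ≤ M₃` has total weighted perimeter at least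
`√(2M₂) + √(2M₁) + √(2(M₁+M₃))`, and the configuration consisting of `[-√(2M₂), 0]`
(mass `M₂`), `[0, √(2M₁)]` (mass `M₁`), and `[√(2M₁), √(2(M₁+M₃))]` (mass `M₃`)
achieves this bound with exactly these masses. -/
theorem triple_bubble (M₁ M₂ M₃ : ℝ) (h₁ : 0 < M₁) (h12 : M₁ ≤ M₂) (h23 : M₂ ≤ M₃) :
    (∀ (k : ℕ) (C : Config 3 k),
      (∃ σ : Equiv.Perm (Fin 3), ∀ i, C.mass (σ i) = ![M₁, M₂, M₃] i) →
      Real.sqrt (2 * M₂) + Real.sqrt (2 * M₁) + Real.sqrt (2 * (M₁ + M₃)) ≤ C.perim) ∧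
    (∃ C : Config 3 3,
      C.lo 0 = -Real.sqrt (2 * M₂) ∧ C.hi 0 = 0 ∧ C.lab 0 = 1 ∧
      C.lo 1 = 0 ∧ C.hi 1 = Real.sqrt (2 * M₁) ∧ C.lab 1 = 0 ∧
      C.lo 2 = Real.sqrt (2 * M₁) ∧ C.hi 2 = Real.sqrt (2 * (M₁ + M₃)) ∧ C.lab 2 = 2 ∧
      C.mass 0 = M₁ ∧ C.mass 1 = M₂ ∧ C.mass 2 = M₃ ∧
      C.perim = Real.sqrt (2 * M₂) + Real.sqrt (2 * M₁) +
        Real.sqrt (2 * (M₁ + M₃))) := by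
  have h₂ : 0 < M₂ := h₁.trans_le h12
  refine ⟨fun k C ⟨σ, hσ⟩ => ?_, ?_⟩
  · have hmass (i : Fin 3) : (C.relabel σ.symm).mass i = ![M₁, M₂, M₃] i := by
      rw [← hσ, ← C.mass_relabel σ.symm, Equiv.symm_apply_apply]
    simpa [rad, Config.perim_relabel] using
      (C.relabel σ.symm).rad_add_rad_add_rad_le_perim (M := ![M₁, M₂, M₃]) h₁.le h12 h23 hmass
  · have hr₁₃ : rad M₁ < rad (M₁ + M₃) := rad_lt_rad h₁.le (by linarith)
    have hmass := Config.mass_standardTriple (rad_pos h₁) (rad_pos h₂) hr₁₃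
    refine ⟨Config.standardTriple (rad_pos h₁) (rad_pos h₂) hr₁₃, rfl, rfl, rfl, rfl, rfl, rfl,
      rfl, rfl, rfl, ?_, ?_, ?_, Config.perim_standardTriple _ _ _⟩ <;>
    simp [hmass, rad_sq h₁.le, rad_sq h₂.le, rad_sq (by linarith : 0 ≤ M₁ + M₃)]
    ring
end
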